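/- Let g be an M♮-convex function with finite nonempty effective domain and let b : E → {0,1}. Assume k̲ + 2 ≤ k̄ and let k ∈ {k̲+2, …, k̄}. Let x_k ∈ 𝒯_k, let (u_k, v_k) be a minimum transition with respect to x_k, set x_{k−1} := x_k − χ_{u_k} + χ_{v_k}, and let (u_{k−1}, v_{k−1}) be a minimum transition with respect to x_{k−1}. Then g(x_k; u_k, v_k) ≤ g(x_{k−1}; u_{k−1}, v_{k−1}). -/

import Mathlib

open scoped BigOperators

/-- Characteristic vector of a singleton `{u}`. -/
def chiv {E : Type*} [DecidableEq E] (u : E) : E → ℤ := fun e => if e = u then 1 else 0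

/-- Characteristic vector allowing the dummy symbol `z` (modelled as `none`), with `χ_z = 0`. -/
def chiOpt {E : Type*} [DecidableEq E] (v : Option E) : E → ℤ :=
  fun e => match v with
  | none => 0
  | some w => chiv w e

/-- M♮-convexity (with nonempty effective domain) for `g : (E → ℤ) → ℝ ∪ {+∞}`. -/
def MnatConvex {E : Type*} [DecidableEq E] (g : (E → ℤ) → WithTop ℝ) : Prop :=
  (∃ x, g x < ⊤) ∧
  ∀ x y : E → ℤ, g x < ⊤ → g y < ⊤ → ∀ u : E, y u < x u →
    (g (x - chiv u) + g (y + chiv u) ≤ g x + g y) ∨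
    (∃ v : E, x v < y v ∧
      g (x - chiv u + chiv v) + g (y + chiv u - chiv v) ≤ g x + g y)

/-- `⟨b,x⟩ = ∑ e, b e * x e`. -/
def innerb {E : Type*} [Fintype E] (b : E → ℤ) (x : E → ℤ) : ℤ := ∑ e, b e * x e

/-- `𝒯_i`: the minimizers of `g` on `𝒫_i = {x ∈ dom g : ⟨b,x⟩ = i}`. -/
def Tset {E : Type*} [Fintype E] (g : (E → ℤ) → WithTop ℝ) (b : E → ℤ) (i : ℤ) :
    Set (E → ℤ) :=
  {x | g x < ⊤ ∧ innerb b x = i ∧ ∀ y : E → ℤ, g y < ⊤ → innerb b y = i → g x ≤ g y}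

/-- A transition `(u,v)` with respect to `x`: `u ∈ E₁`, `v ∈ E₀ ∪ {z}`, and
`x - χ_u + χ_v ∈ dom g`. -/
def IsTransition {E : Type*} [DecidableEq E] (g : (E → ℤ) → WithTop ℝ) (b : E → ℤ)
    (x : E → ℤ) (u : E) (v : Option E) : Prop :=
  b u = 1 ∧ (∀ w : E, v = some w → b w = 0) ∧ g (x - chiv u + chiOpt v) < ⊤

/-- The cost `g(x;u,v) = g(x - χ_u + χ_v) - g(x)` of a transition (as a real number;
both values are finite for transitions with respect to `x ∈ dom g`). -/
noncomputable def transCost {E : Type*} [DecidableEq E] (g : (E → ℤ) → WithTop ℝ)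
    (x : E → ℤ) (u : E) (v : Option E) : ℝ :=
  (g (x - chiv u + chiOpt v)).untopD 0 - (g x).untopD 0

/-- A minimum transition with respect to `x`. -/
def IsMinTransition {E : Type*} [Fintype E] [DecidableEq E] (g : (E → ℤ) → WithTop ℝ)
    (b : E → ℤ) (x : E → ℤ) (u : E) (v : Option E) : Prop :=
  IsTransition g b x u v ∧
    ∀ (u' : E) (v' : Option E), IsTransition g b x u' v' →
      transCost g x u v ≤ transCost g x u' v'


/-!
Since `b` is `0/1`-valued, an M♮-exchange between the minimizer `x_k` and a point `y` of lower
level either uses a transition `(u, v)` at `x_k`, and then `y + χ_u - χ_v` lies one level higher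
with `g(y) - g(y + χ_u - χ_v) ≥ g(x_k; u_k, v_k)`, or swaps two coordinates of `E₁`, which keeps
the level of `y`, does not increase `g(y)` (by minimality of `x_k`) and moves `y` closer to `x_k`.
Iterating, every `y ∈ dom g` below level `k` can be raised by one level at a gain of at least
`g(x_k; u_k, v_k)`. At level `k - 1` this shows `x_{k-1} ∈ 𝒯_{k-1}`; applied to
`y = x_{k-1} - χ_{u_{k-1}} + χ_{v_{k-1}}` at level `k - 2` it gives the claim.
-/

@[simp]
lemma chiOpt_none {E : Type*} [DecidableEq E] : chiOpt (none : Option E) = 0 := rfl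

@[simp]
lemma chiOpt_some {E : Type*} [DecidableEq E] (v : E) : chiOpt (some v) = chiv v := rfl

namespace WithTop

variable {α : Type*} {a b c d : WithTop α} {e : α}

lemma untopD_le_untopD_iff [Preorder α] (ha : a ≠ ⊤) (hb : b ≠ ⊤) :
    a.untopD e ≤ b.untopD e ↔ a ≤ b := by
  lift a to α using ha
  lift b to α using hb
  simp

lemma untopD_add_le_untopD_add [Add α] [PartialOrder α] (hcd : c + d ≠ ⊤) (h : a + b ≤ c + d) :
    a.untopD e + b.untopD e ≤ c.untopD e + d.untopD e := by
  have hab : a + b ≠ ⊤ := ne_top_of_le_ne_top (α := WithTop α) hcd h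
  obtain ⟨ha, hb⟩ := add_ne_top.1 hab
  obtain ⟨hc, hd⟩ := add_ne_top.1 hcd
  rw [← untopD_add ha hb, ← untopD_add hc hd]
  exact (untopD_le_untopD_iff hab hcd).2 h

end WithTop

section Level

variable {E : Type*} [Fintype E] {b : E → ℤ}

@[simp]
lemma innerb_add (x y : E → ℤ) : innerb b (x + y) = innerb b x + innerb b y := by
  simp [innerb, mul_add, Finset.sum_add_distrib]

@[simp]
lemma innerb_sub (x y : E → ℤ) : innerb b (x - y) = innerb b x - innerb b y := by
  simp [innerb, mul_sub, Finset.sum_sub_distrib]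

lemma exists_lt_of_innerb_lt (hb : ∀ e, b e = 0 ∨ b e = 1) {x y : E → ℤ}
    (h : innerb b y < innerb b x) : ∃ u, b u = 1 ∧ y u < x u := by
  obtain ⟨u, -, hu⟩ := Finset.exists_lt_of_sum_lt h
  rcases hb u with h0 | h1
  · simp [h0] at hu
  · exact ⟨u, h1, by simpa [h1] using hu⟩

variable [DecidableEq E]

@[simp]
lemma innerb_chiv (u : E) : innerb b (chiv u) = b u := by
  simp [innerb, chiv]

lemma innerb_chiOpt_eq_zero {w : Option E} (hw : ∀ v, w = some v → b v = 0) :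
    innerb b (chiOpt w) = 0 := by
  cases w with
  | none => simp [innerb]
  | some v => simpa using hw v rfl

end Level

lemma sum_natAbs_sub_exchange_lt {E : Type*} [Fintype E] [DecidableEq E] {x y : E → ℤ}
    {u v : E} (hu : y u < x u) (hv : x v < y v) :
    ∑ e, (x e - (y + chiv u - chiv v) e).natAbs < ∑ e, (x e - y e).natAbs := by
  refine Finset.sum_lt_sum (fun e _ => ?_) ⟨u, Finset.mem_univ u, ?_⟩ <;>
    simp only [Pi.sub_apply, Pi.add_apply, chiv] <;> split_ifs <;> subst_vars <;> omega

lemma MnatConvex.exists_exchange {E : Type*} [DecidableEq E] {g : (E → ℤ) → WithTop ℝ}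
    (hg : MnatConvex g) {x y : E → ℤ} (hx : g x < ⊤) (hy : g y < ⊤) {u : E} (hu : y u < x u) :
    ∃ w : Option E, (∀ v, w = some v → x v < y v) ∧
      g (x - chiv u + chiOpt w) + g (y + chiv u - chiOpt w) ≤ g x + g y := by
  rcases hg.2 x y hx hy u hu with h | ⟨v, hv, h⟩
  · exact ⟨none, by simp, by simpa using h⟩
  · exact ⟨some v, by simpa using hv, by simpa using h⟩

section MinimumTransition

variable {E : Type*} [Fintype E] [DecidableEq E] {g : (E → ℤ) → WithTop ℝ} {b : E → ℤ}
  {k : ℤ} {x : E → ℤ} {u : E} {v : Option E}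

lemma exists_exchange_step (hg : MnatConvex g) (hb : ∀ e, b e = 0 ∨ b e = 1)
    (hx : x ∈ Tset g b k) (hmin : IsMinTransition g b x u v) {y : E → ℤ} (hy : g y < ⊤)
    (hyk : innerb b y < k) :
    ∃ y', g y' < ⊤ ∧
      ((innerb b y' = innerb b y + 1 ∧
          transCost g x u v + (g y').untopD 0 ≤ (g y).untopD 0) ∨
        (innerb b y' = innerb b y ∧
          ∑ e, (x e - y' e).natAbs < ∑ e, (x e - y e).natAbs ∧
          (g y').untopD 0 ≤ (g y).untopD 0)) := by
  obtain ⟨hgx, hxk, hxmin⟩ := hx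
  obtain ⟨u', hu', hyx⟩ := exists_lt_of_innerb_lt hb (hxk ▸ hyk)
  obtain ⟨w, hwxy, hexch⟩ := hg.exists_exchange hgx hy hyx
  have hfin : g x + g y ≠ ⊤ := WithTop.add_ne_top.2 ⟨hgx.ne, hy.ne⟩
  obtain ⟨hx', hy'⟩ := WithTop.add_ne_top.1 (ne_top_of_le_ne_top hfin hexch)
  have hreal := WithTop.untopD_add_le_untopD_add (e := 0) hfin hexch
  refine ⟨y + chiv u' - chiOpt w, hy'.lt_top, ?_⟩
  by_cases hw1 : ∃ v', w = some v' ∧ b v' = 1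
  · obtain ⟨v', rfl, hv'⟩ := hw1
    have hlev : innerb b (x - chiv u' + chiv v') = k := by simp [hxk, hu', hv']
    have hgx_le := (WithTop.untopD_le_untopD_iff (e := 0) hgx.ne hx').2
      (hxmin _ hx'.lt_top hlev)
    refine Or.inr ⟨by simp [hu', hv'], sum_natAbs_sub_exchange_lt hyx (hwxy v' rfl), ?_⟩
    simp only [chiOpt_some] at hreal hgx_le ⊢
    linarith
  · have hw0 : ∀ v', w = some v' → b v' = 0 := fun v' hv' =>
      (hb v').resolve_right fun h1 => hw1 ⟨v', hv', h1⟩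
    have hcost := hmin.2 u' w ⟨hu', hw0, hx'.lt_top⟩
    refine Or.inl ⟨by simp [innerb_chiOpt_eq_zero hw0, hu'], ?_⟩
    unfold transCost at hcost ⊢
    linarith

lemma exists_innerb_eq_add_one_transCost_add_le (hg : MnatConvex g)
    (hb : ∀ e, b e = 0 ∨ b e = 1) (hx : x ∈ Tset g b k) (hmin : IsMinTransition g b x u v)
    {y : E → ℤ} (hy : g y < ⊤) (hyk : innerb b y < k) :
    ∃ y', g y' < ⊤ ∧ innerb b y' = innerb b y + 1 ∧
      transCost g x u v + (g y').untopD 0 ≤ (g y).untopD 0 := by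
  induction hn : ∑ e, (x e - y e).natAbs using Nat.strong_induction_on generalizing y with
  | _ n ih =>
    obtain ⟨y', hy', ⟨hlev, hle⟩ | ⟨hlev, hdist, hle⟩⟩ :=
      exists_exchange_step hg hb hx hmin hy hyk
    · exact ⟨y', hy', hlev, hle⟩
    · obtain ⟨y'', hy'', hlev', hle'⟩ := ih _ (hn ▸ hdist) hy' (hlev ▸ hyk) rfl
      exact ⟨y'', hy'', hlev ▸ hlev', by linarith⟩

theorem mem_Tset_sub_one_of_isMinTransition (hg : MnatConvex g)
    (hb : ∀ e, b e = 0 ∨ b e = 1) (hx : x ∈ Tset g b k) (hmin : IsMinTransition g b x u v) :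
    x - chiv u + chiOpt v ∈ Tset g b (k - 1) := by
  obtain ⟨hu, hv, hx'⟩ := hmin.1
  refine ⟨hx', by simp [innerb_chiOpt_eq_zero hv, hx.2.1, hu], fun y hy hyk => ?_⟩
  obtain ⟨y', hy', hlev, hle⟩ :=
    exists_innerb_eq_add_one_transCost_add_le hg hb hx hmin hy (by omega)
  have hxy' := (WithTop.untopD_le_untopD_iff (e := 0) hx.1.ne hy'.ne).2
    (hx.2.2 y' hy' (by omega))
  rw [← WithTop.untopD_le_untopD_iff (e := 0) hx'.ne hy.ne]
  unfold transCost at hle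
  linarith

end MinimumTransition

theorem stmt_5_general {E : Type*} [Fintype E] [DecidableEq E]
    (g : (E → ℤ) → WithTop ℝ) (b : E → ℤ)
    (hg : MnatConvex g)
    (hb : ∀ e : E, b e = 0 ∨ b e = 1)
    (k : ℤ)
    (xk : E → ℤ) (hxk : xk ∈ Tset g b k)
    (uk : E) (vk : Option E) (hmink : IsMinTransition g b xk uk vk)
    (xkm1 : E → ℤ) (hxkm1 : xkm1 = xk - chiv uk + chiOpt vk)
    (ukm1 : E) (vkm1 : Option E) (hminkm1 : IsMinTransition g b xkm1 ukm1 vkm1) :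
    transCost g xk uk vk ≤ transCost g xkm1 ukm1 vkm1 := by
  have hxkm1_mem : xkm1 ∈ Tset g b (k - 1) :=
    hxkm1 ▸ mem_Tset_sub_one_of_isMinTransition hg hb hxk hmink
  obtain ⟨hukm1, hvkm1, hy⟩ := hminkm1.1
  have hylev : innerb b (xkm1 - chiv ukm1 + chiOpt vkm1) = k - 2 := by
    rw [innerb_add, innerb_sub, innerb_chiv, innerb_chiOpt_eq_zero hvkm1, hxkm1_mem.2.1, hukm1]
    ring
  obtain ⟨y', hy', hlev, hle⟩ :=
    exists_innerb_eq_add_one_transCost_add_le hg hb hxk hmink hy (by omega)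
  have hxkm1_le := (WithTop.untopD_le_untopD_iff (e := 0) hxkm1_mem.1.ne hy'.ne).2
    (hxkm1_mem.2.2 y' hy' (by omega))
  unfold transCost at hle ⊢
  linarith

/-- costs of successive minimum transitions are non-decreasing as `k`
decreases: `g(x_k; u_k, v_k) ≤ g(x_{k-1}; u_{k-1}, v_{k-1})`. -/
theorem stmt_5 {E : Type*} [Fintype E] [DecidableEq E] [Nonempty E]
    (g : (E → ℤ) → WithTop ℝ) (b : E → ℤ)
    (hg : MnatConvex g)
    (hfin : {x : E → ℤ | g x < ⊤}.Finite)
    (hb : ∀ e : E, b e = 0 ∨ b e = 1)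
    (kmin kmax : ℤ)
    (hkmin : (Tset g b kmin).Nonempty ∧ ∀ k : ℤ, (Tset g b k).Nonempty → kmin ≤ k)
    (hkmax : (Tset g b kmax).Nonempty ∧ ∀ k : ℤ, (Tset g b k).Nonempty → k ≤ kmax)
    (hgap : kmin + 2 ≤ kmax)
    (k : ℤ) (hk1 : kmin + 2 ≤ k) (hk2 : k ≤ kmax)
    (xk : E → ℤ) (hxk : xk ∈ Tset g b k)
    (uk : E) (vk : Option E) (hmink : IsMinTransition g b xk uk vk)
    (xkm1 : E → ℤ) (hxkm1 : xkm1 = xk - chiv uk + chiOpt vk)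
    (ukm1 : E) (vkm1 : Option E) (hminkm1 : IsMinTransition g b xkm1 ukm1 vkm1) :
    transCost g xk uk vk ≤ transCost g xkm1 ukm1 vkm1 :=
  stmt_5_general g b hg hb k xk hxk uk vk hmink xkm1 hxkm1 ukm1 vkm1 hminkm1
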